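/- Let T be an antilinear operator on ℂ² with T² = I. Then there exists a 2×2 complex matrix P with P² = I, P ≠ I, P ≠ -I, and P T = T P as maps on ℂ². -/
import Mathlib


open Matrix Complex

noncomputable def Vmat (v w : Fin 2 → ℂ) : Matrix (Fin 2) (Fin 2) ℂ :=
  Matrix.of ![![v 0, w 0], ![v 1, w 1]]

lemma Vmat_mulVec (v w : Fin 2 → ℂ) (y : Fin 2 → ℂ) :
    (Vmat v w).mulVec y = y 0 • v + y 1 • w := by
  funext i
  fin_cases i <;>
    simp [Vmat, Matrix.mulVec, dotProduct, Fin.sum_univ_two] <;> ring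

lemma Vmat_det (v w : Fin 2 → ℂ) :
    (Vmat v w).det = v 0 * w 1 - w 0 * v 1 := by
  simp [Vmat, Matrix.det_fin_two_of]

noncomputable def Dmat : Matrix (Fin 2) (Fin 2) ℂ :=
  Matrix.of ![![1, 0], ![0, -1]]

lemma Dmat_mul_Dmat : Dmat * Dmat = 1 := by
  ext i j
  fin_cases i <;> fin_cases j <;>
    simp [Dmat, Matrix.mul_apply, Fin.sum_univ_two, Matrix.one_apply]

lemma Dmat_mulVec (y : Fin 2 → ℂ) : Dmat.mulVec y = ![y 0, -(y 1)] := by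
  funext i
  fin_cases i <;>
    simp [Dmat, Matrix.mulVec, dotProduct, Fin.sum_univ_two]

lemma helper (T : (Fin 2 → ℂ) → (Fin 2 → ℂ))
    (hT : ∀ (s t : ℂ) (x y : Fin 2 → ℂ),
      T (s • x + t • y) = (starRingEnd ℂ s) • T x + (starRingEnd ℂ t) • T y)
    (v w : Fin 2 → ℂ) (hv : T v = v) (hw : T w = w)
    (hdet : (Vmat v w).det ≠ 0) :
    ∃ P : Matrix (Fin 2) (Fin 2) ℂ,
      P * P = 1 ∧ P ≠ 1 ∧ P ≠ -1 ∧ ∀ x, P.mulVec (T x) = T (P.mulVec x) := by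
  set V := Vmat v w with hV
  have hunit : IsUnit V.det := isUnit_iff_ne_zero.mpr hdet
  have hVinv : V * V⁻¹ = 1 := Matrix.mul_nonsing_inv V hunit
  have hinvV : V⁻¹ * V = 1 := Matrix.nonsing_inv_mul V hunit
  refine ⟨V * Dmat * V⁻¹, ?_, ?_, ?_, ?_⟩
  · simp only [Matrix.mul_assoc]
    rw [show V⁻¹ * (V * (Dmat * V⁻¹)) = Dmat * V⁻¹ by
      rw [← Matrix.mul_assoc, hinvV, Matrix.one_mul]]
    rw [show Dmat * (Dmat * V⁻¹) = V⁻¹ by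
      rw [← Matrix.mul_assoc, Dmat_mul_Dmat, Matrix.one_mul]]
    exact hVinv
  · intro h
    have hDval : Dmat = V⁻¹ * (V * Dmat * V⁻¹) * V := by
      simp only [Matrix.mul_assoc, hinvV, Matrix.mul_one]
      rw [← Matrix.mul_assoc, hinvV, Matrix.one_mul]
    rw [h, Matrix.mul_one, hinvV] at hDval
    have h11 : Dmat 1 1 = (1 : Matrix (Fin 2) (Fin 2) ℂ) 1 1 := by rw [hDval]
    simp [Dmat, Matrix.one_apply] at h11
    norm_num at h11
  · intro h
    have hDval : Dmat = V⁻¹ * (V * Dmat * V⁻¹) * V := by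
      simp only [Matrix.mul_assoc, hinvV, Matrix.mul_one]
      rw [← Matrix.mul_assoc, hinvV, Matrix.one_mul]
    rw [h, Matrix.mul_neg, Matrix.mul_one, Matrix.neg_mul, hinvV] at hDval
    have h00 : Dmat 0 0 = (-1 : Matrix (Fin 2) (Fin 2) ℂ) 0 0 := by rw [hDval]
    simp [Dmat, Matrix.one_apply] at h00
    norm_num at h00
  · intro x
    set a := V⁻¹.mulVec x with ha
    have hx : x = a 0 • v + a 1 • w := by
      rw [← Vmat_mulVec v w a, ← hV, ha, Matrix.mulVec_mulVec, hVinv, Matrix.one_mulVec]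
    have hTx : T x = (starRingEnd ℂ (a 0)) • v + (starRingEnd ℂ (a 1)) • w := by
      rw [hx, hT, hv, hw]
    have key : ∀ (c : Fin 2 → ℂ),
        (V * Dmat * V⁻¹).mulVec (c 0 • v + c 1 • w) = c 0 • v - c 1 • w := by
      intro c
      rw [← Vmat_mulVec v w c, ← hV, Matrix.mulVec_mulVec]
      rw [show V * Dmat * V⁻¹ * V = V * Dmat by rw [Matrix.mul_assoc, hinvV, Matrix.mul_one]]
      rw [← Matrix.mulVec_mulVec, Dmat_mulVec, hV, Vmat_mulVec]
      simp only [Matrix.cons_val_zero, Matrix.cons_val_one, Matrix.head_cons]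
      module
    have h1 : (V * Dmat * V⁻¹).mulVec (T x)
        = (starRingEnd ℂ (a 0)) • v - (starRingEnd ℂ (a 1)) • w := by
      rw [hTx]
      exact key ![starRingEnd ℂ (a 0), starRingEnd ℂ (a 1)]
    have h2 : (V * Dmat * V⁻¹).mulVec x = a 0 • v + (-(a 1)) • w := by
      rw [hx]
      have := key ![a 0, a 1]
      simp only [Matrix.cons_val_zero, Matrix.cons_val_one, Matrix.head_cons] at this
      rw [this]
      module
    rw [h1, h2, hT, hv, hw]
    simp [sub_eq_add_neg]

theorem stmt8 (T : (Fin 2 → ℂ) → (Fin 2 → ℂ))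
    (hT : ∀ (s t : ℂ) (x y : Fin 2 → ℂ),
      T (s • x + t • y) = (starRingEnd ℂ s) • T x + (starRingEnd ℂ t) • T y)
    (hT2 : ∀ x, T (T x) = x) :
    ∃ P : Matrix (Fin 2) (Fin 2) ℂ,
      P * P = 1 ∧ P ≠ 1 ∧ P ≠ -1 ∧ ∀ x, P.mulVec (T x) = T (P.mulVec x) := by
  -- basic properties of T
  have hadd : ∀ x y, T (x + y) = T x + T y := by
    intro x y
    have := hT 1 1 x y
    simpa using this
  have hsmul : ∀ (s : ℂ) x, T (s • x) = (starRingEnd ℂ s) • T x := by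
    intro s x
    have := hT s 0 x x
    simpa using this
  have hsub : ∀ x y, T (x - y) = T x - T y := by
    intro x y
    have := hT 1 (-1) x y
    simp only [one_smul, neg_smul, _root_.map_one, map_neg] at this
    simpa [sub_eq_add_neg] using this
  -- fixed vectors
  set e0 : Fin 2 → ℂ := ![1, 0] with he0
  set e1 : Fin 2 → ℂ := ![0, 1] with he1
  set f0 : Fin 2 → ℂ := e0 + T e0 with hf0
  set g0 : Fin 2 → ℂ := Complex.I • (e0 - T e0) with hg0
  set f1 : Fin 2 → ℂ := e1 + T e1 with hf1
  set g1 : Fin 2 → ℂ := Complex.I • (e1 - T e1) with hg1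
  have hTf0 : T f0 = f0 := by
    rw [hf0, hadd, hT2]; abel
  have hTf1 : T f1 = f1 := by
    rw [hf1, hadd, hT2]; abel
  have hTg0 : T g0 = g0 := by
    rw [hg0, hsmul, hsub, hT2]
    simp only [Complex.conj_I]
    module
  have hTg1 : T g1 = g1 := by
    rw [hg1, hsmul, hsub, hT2]
    simp only [Complex.conj_I]
    module
  -- combinations recovering e0, e1
  have hcomb0 : f0 - Complex.I • g0 = (2 : ℂ) • e0 := by
    rw [hf0, hg0, smul_smul, Complex.I_mul_I]
    module
  have hcomb1 : f1 - Complex.I • g1 = (2 : ℂ) • e1 := by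
    rw [hf1, hg1, smul_smul, Complex.I_mul_I]
    module
  by_cases h01 : (Vmat f0 g0).det ≠ 0
  · exact helper T hT f0 g0 hTf0 hTg0 h01
  by_cases h11 : (Vmat f1 g1).det ≠ 0
  · exact helper T hT f1 g1 hTf1 hTg1 h11
  push_neg at h01 h11
  rw [Vmat_det] at h01 h11
  -- from det = 0 and the combination, conclude f0, g0 supported on coordinate 0
  have hc00 : f0 0 - Complex.I * g0 0 = 2 := by
    have := congrFun hcomb0 0
    simpa [he0] using this
  have hc01 : f0 1 - Complex.I * g0 1 = 0 := by
    have := congrFun hcomb0 1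
    simpa [he0] using this
  have hc10 : f1 0 - Complex.I * g1 0 = 0 := by
    have := congrFun hcomb1 0
    simpa [he1] using this
  have hc11 : f1 1 - Complex.I * g1 1 = 2 := by
    have := congrFun hcomb1 1
    simpa [he1] using this
  -- g0 1 = 0 and f0 1 = 0
  have hg01 : g0 1 = 0 := by
    have h := mul_sub (g0 1) (f0 0) (Complex.I * g0 0)
    have : g0 1 * (f0 0 - Complex.I * g0 0) = 0 := by
      rw [mul_sub]
      have : g0 1 * f0 0 = g0 1 * (Complex.I * g0 0) := by
        have hf01 : f0 1 = Complex.I * g0 1 := by linear_combination hc01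
        calc g0 1 * f0 0 = f0 0 * g0 1 := by ring
          _ = g0 0 * f0 1 := by linear_combination h01
          _ = g0 1 * (Complex.I * g0 0) := by rw [hf01]; ring
      rw [this]; ring
    rw [hc00] at this
    exact (mul_eq_zero.mp this).resolve_right two_ne_zero
  have hf01' : f0 1 = 0 := by
    have : f0 1 = Complex.I * g0 1 := by linear_combination hc01
    rw [this, hg01, mul_zero]
  -- g1 0 = 0 and f1 0 = 0
  have hg10 : g1 0 = 0 := by
    have : g1 0 * (f1 1 - Complex.I * g1 1) = 0 := by
      rw [mul_sub]
      have hf10 : f1 0 = Complex.I * g1 0 := by linear_combination hc10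
      have : g1 0 * f1 1 = g1 0 * (Complex.I * g1 1) := by
        calc g1 0 * f1 1 = f1 0 * g1 1 := by linear_combination -h11
          _ = Complex.I * g1 0 * g1 1 := by rw [hf10]
          _ = g1 0 * (Complex.I * g1 1) := by ring
      rw [this]; ring
    rw [hc11] at this
    exact (mul_eq_zero.mp this).resolve_right two_ne_zero
  have hf10' : f1 0 = 0 := by
    have : f1 0 = Complex.I * g1 0 := by linear_combination hc10
    rw [this, hg10, mul_zero]
  -- pick p from {f0, g0} with p 0 ≠ 0 and p 1 = 0
  have hone : f0 0 ≠ 0 ∨ g0 0 ≠ 0 := by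
    by_contra h
    push_neg at h
    rw [h.1, h.2] at hc00
    simp at hc00
  have htwo : f1 1 ≠ 0 ∨ g1 1 ≠ 0 := by
    by_contra h
    push_neg at h
    rw [h.1, h.2] at hc11
    simp at hc11
  obtain ⟨p, hTp, hp0, hp1⟩ : ∃ p, T p = p ∧ p 0 ≠ 0 ∧ p 1 = 0 := by
    rcases hone with h | h
    · exact ⟨f0, hTf0, h, hf01'⟩
    · exact ⟨g0, hTg0, h, hg01⟩
  obtain ⟨q, hTq, hq1, hq0⟩ : ∃ q, T q = q ∧ q 1 ≠ 0 ∧ q 0 = 0 := by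
    rcases htwo with h | h
    · exact ⟨f1, hTf1, h, hf10'⟩
    · exact ⟨g1, hTg1, h, hg10⟩
  apply helper T hT p q hTp hTq
  rw [Vmat_det, hp1, hq0]
  simp [hp0, hq1]
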